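/- arXiv:1404.0110 — 3 statements merged into one kernel-verified Lean document; each statement's English description precedes it below -/
import Mathlib

section
/- Let q be a prime power with q ≥ 5 such that 3 does not divide q-1. Then there exist vectors u, v ∈ D_q with |Ẽ(u) ∩ Ẽ(v)| = 2(q-1); hence 2(q-1) is the largest t such that the family {Ẽ(u) : u ∈ D_q} is t-intersecting. -/
open Set Pointwise

variable {F : Type*} [Field F]

/-- Hamming distance on `𝔽_q³`. -/
noncomputable def hdist (u v : Fin 3 → F) : ℕ := Set.ncard {i : Fin 3 | u i ≠ v i}

/-- The ball of radius 1 centered at `u`. -/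
def ball (u : Fin 3 → F) : Set (Fin 3 → F) := {v | hdist u v ≤ 1}

/-- The extended ball of `u`: the union of the balls centered at scalar multiples of `u`. -/
def extBall (u : Fin 3 → F) : Set (Fin 3 → F) := ⋃ l : F, ball (l • u)

/-- `D_q`: vectors with pairwise distinct, nonzero coordinates. -/
def Dq : Set (Fin 3 → F) :=
  {u | u 0 ≠ u 1 ∧ u 0 ≠ u 2 ∧ u 1 ≠ u 2 ∧ u 0 ≠ 0 ∧ u 1 ≠ 0 ∧ u 2 ≠ 0}

/-- `B̃(u) = B(u) ∩ D_q`. -/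
def ballD (u : Fin 3 → F) : Set (Fin 3 → F) := ball u ∩ Dq

/-- `Ẽ(u) = E(u) ∩ D_q`. -/
def extBallD (u : Fin 3 → F) : Set (Fin 3 → F) := extBall u ∩ Dq

/-- `H` is a short covering if the extended balls centered at its elements cover the space. -/
def ShortCovering (H : Set (Fin 3 → F)) : Prop := (⋃ h ∈ H, extBall h) = Set.univ


/-
Every vector of `D_q` is a nonzero multiple of some `![1, x, y]`, and `Ẽ(u) ∩ Ẽ(v)` is stable
under nonzero scaling, so it has `q - 1` times as many elements as it has vectors with first
coordinate `1`. For `u = ![1, α, β]`, the vector `![1, x, y]` lies in `E(u)` iff the point `(x, y)`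
lies on one of the three lines `x = α`, `y = β`, `x β = y α` through `(α, β)`.
If `u` and `v` share one of these lines, it carries at least `q - 3 ≥ 2` admissible points.
Otherwise the lines of `u` meet those of `v` in the triple `(α, δ), (γ, β γ / α), (β γ / δ, β)`
and in its mirror image under `u ↔ v`; a triple keeps at least two admissible points unless
`α = δ = β γ`, and both triples degenerate only if `α³ = 1`, which `3 ∤ q - 1` rules out.
For `u = ![1, a, a²]`, `v = ![1, a², a]` exactly the two points `(a², a³)`, `(a³, a²)` survive.
-/
lemma hdist_le_one_iff {X : Type*} (u w : Fin 3 → X) :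
    hdist u w ≤ 1 ↔
      (u 0 = w 0 ∧ u 1 = w 1) ∨ (u 0 = w 0 ∧ u 2 = w 2) ∨ (u 1 = w 1 ∧ u 2 = w 2) := by
  rw [hdist, ncard_le_one_iff_subsingleton, Set.Subsingleton]
  simp only [mem_ofPred_eq, Fin.forall_fin_succ, Fin.succ_zero_eq_one, Fin.succ_one_eq_two,
    IsEmpty.forall_iff, implies_true, and_true, imp_false, not_not, Fin.reduceEq, Fin.succ_ne_zero,
    zero_ne_one, true_and]
  tauto

lemma hdist_smul {c : F} (hc : c ≠ 0) (u w : Fin 3 → F) : hdist (c • u) (c • w) = hdist u w := by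
  simp [hdist, hc]

lemma vec_mem_Dq_iff {x y : F} : ![1, x, y] ∈ (Dq : Set (Fin 3 → F)) ↔
    x ≠ 0 ∧ y ≠ 0 ∧ x ≠ 1 ∧ y ≠ 1 ∧ x ≠ y := by
  simp only [Dq, mem_ofPred_eq, Matrix.cons_val_zero, Matrix.cons_val_one, Matrix.cons_val]
  constructor
  · rintro ⟨h1x, h1y, hxy, -, hx, hy⟩
    exact ⟨hx, hy, h1x.symm, h1y.symm, hxy⟩
  · rintro ⟨hx, hy, hx1, hy1, hxy⟩
    exact ⟨hx1.symm, hy1.symm, hxy, one_ne_zero, hx, hy⟩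

lemma smul_mem_Dq {c : F} (hc : c ≠ 0) {w : Fin 3 → F} (hw : w ∈ Dq) : c • w ∈ Dq := by
  obtain ⟨h01, h02, h12, h0, h1, h2⟩ := hw
  simp [Dq, *]

lemma vec_mem_extBall_iff {α β x y : F} (hα : α ≠ 0) :
    ![1, x, y] ∈ extBall ![1, α, β] ↔ x = α ∨ y = β ∨ x * β = y * α := by
  simp only [extBall, ball, mem_iUnion, mem_ofPred_eq, hdist_le_one_iff, Pi.smul_apply,
    smul_eq_mul, Matrix.cons_val_zero, Matrix.cons_val_one, Matrix.cons_val, mul_one]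
  constructor
  · rintro ⟨l, ⟨rfl, rfl⟩ | ⟨rfl, rfl⟩ | ⟨rfl, rfl⟩⟩
    · simp
    · simp
    · right; right; ring
  · rintro (rfl | rfl | h)
    · exact ⟨1, by simp⟩
    · exact ⟨1, by simp⟩
    · refine ⟨x / α, ?_⟩
      right; right
      constructor
      · field_simp
      · field_simp; linear_combination h

lemma smul_mem_extBall {c : F} (hc : c ≠ 0) {u w : Fin 3 → F} (hw : w ∈ extBall u) :
    c • w ∈ extBall u := by
  obtain ⟨l, hl⟩ := mem_iUnion.1 hw
  refine mem_iUnion.2 ⟨c * l, ?_⟩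
  rw [ball, mem_ofPred_eq, mul_smul, hdist_smul hc]
  exact hl

lemma extBall_smul {c : F} (hc : c ≠ 0) (u : Fin 3 → F) : extBall (c • u) = extBall u := by
  ext w
  simp only [extBall, mem_iUnion, smul_smul]
  constructor
  · rintro ⟨l, hl⟩; exact ⟨l * c, hl⟩
  · rintro ⟨l, hl⟩; exact ⟨l / c, by rwa [div_mul_cancel₀ _ hc]⟩

lemma smul_mem_extBallD {c : F} (hc : c ≠ 0) {u w : Fin 3 → F} (hw : w ∈ extBallD u) :
    c • w ∈ extBallD u :=
  ⟨smul_mem_extBall hc hw.1, smul_mem_Dq hc hw.2⟩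

lemma extBall_eq_vec {u : Fin 3 → F} (hu : u 0 ≠ 0) :
    extBall u = extBall ![1, u 1 / u 0, u 2 / u 0] := by
  rw [← extBall_smul hu ![1, u 1 / u 0, u 2 / u 0]]
  congr 1
  ext i
  fin_cases i <;> simp [mul_div_cancel₀ _ hu]

lemma vec_div_mem_Dq {u : Fin 3 → F} (hu : u ∈ Dq) : ![1, u 1 / u 0, u 2 / u 0] ∈ Dq := by
  obtain ⟨h01, h02, h12, h0, h1, h2⟩ := hu
  rw [vec_mem_Dq_iff]
  refine ⟨div_ne_zero h1 h0, div_ne_zero h2 h0, ?_, ?_, ?_⟩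
  · exact fun h => h01 ((div_eq_one_iff_eq h0).1 h).symm
  · exact fun h => h02 ((div_eq_one_iff_eq h0).1 h).symm
  · exact fun h => h12 ((div_left_inj' h0).1 h)

lemma ncard_eq_card_sub_one_mul_ncard [Fintype F] {ι : Type*} {T : Set (ι → F)} (i : ι)
    (hT : ∀ w ∈ T, w i ≠ 0) (hsmul : ∀ c : F, c ≠ 0 → ∀ w ∈ T, c • w ∈ T) :
    T.ncard = (Fintype.card F - 1) * {e ∈ T | e i = 1}.ncard := by
  have hinj : InjOn (fun p : F × (ι → F) => p.1 • p.2) ({0}ᶜ ×ˢ {e ∈ T | e i = 1}) := by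
    rintro ⟨c, e⟩ ⟨hc, -, he : e i = 1⟩ ⟨c', e'⟩ ⟨-, -, he' : e' i = 1⟩ h
    have hcc : c = c' := by simpa [he, he'] using congrFun h i
    subst hcc
    exact Prod.ext rfl (smul_right_injective _ hc h)
  have himage : (fun p : F × (ι → F) => p.1 • p.2) '' ({0}ᶜ ×ˢ {e ∈ T | e i = 1}) = T := by
    refine Subset.antisymm ?_ fun w hw => ?_
    · rintro _ ⟨⟨c, e⟩, ⟨hc, he, -⟩, rfl⟩
      exact hsmul c hc e he
    · refine ⟨(w i, (w i)⁻¹ • w), ⟨hT w hw, hsmul _ (inv_ne_zero (hT w hw)) w hw, ?_⟩, ?_⟩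
      · simp [hT w hw]
      · simp [smul_smul, hT w hw]
  conv_lhs => rw [← himage, hinj.ncard_image]
  rw [ncard_prod, ncard_compl, ncard_singleton, Nat.card_eq_fintype_card]

lemma ncard_inter_extBallD [Fintype F] (u v : Fin 3 → F) :
    (extBallD u ∩ extBallD v).ncard =
      (Fintype.card F - 1) * {e ∈ extBallD u ∩ extBallD v | e 0 = 1}.ncard :=
  ncard_eq_card_sub_one_mul_ncard 0 (fun _ hw => hw.1.2.2.2.2.1)
    fun _ hc _ hw => ⟨smul_mem_extBallD hc hw.1, smul_mem_extBallD hc hw.2⟩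

lemma nontrivial_compl_triple {X : Type*} [Fintype X] (hX : 5 ≤ Fintype.card X) (x y z : X) :
    ({x, y, z}ᶜ : Set X).Nontrivial := by
  rw [← one_lt_ncard_iff_nontrivial, ncard_compl, Nat.card_eq_fintype_card]
  have := (ncard_insert_le x {y, z}).trans (Nat.add_le_add_right (ncard_insert_le y {z}) 1)
  rw [ncard_singleton] at this
  omega

lemma nontrivial_of_not_all_eq {X Y : Type*} {S : Set X} {p q r : X} (hpq : p ≠ q) (hpr : p ≠ r)
    (hqr : q ≠ r) {a b c : Y} (hp : a ≠ b → p ∈ S) (hq : a ≠ c → q ∈ S) (hr : b ≠ c → r ∈ S)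
    (habc : ¬(a = b ∧ a = c)) : S.Nontrivial := by
  by_cases hab : a = b
  · have hac : a ≠ c := fun h => habc ⟨hab, h⟩
    exact ⟨q, hq hac, r, hr (hab ▸ hac), hqr⟩
  by_cases hac : a = c
  · exact ⟨p, hp hab, r, hr (hac ▸ Ne.symm hab), hpr⟩
  · exact ⟨p, hp hab, q, hq hac, hpq⟩

lemma eq_one_of_pow_eq_one_of_coprime [Fintype F] {n : ℕ} (hn : n.Coprime (Fintype.card F - 1))
    {x : F} (hx0 : x ≠ 0) (hx : x ^ n = 1) : x = 1 :=
  (pow_eq_one_iff_of_coprime hn).1 ⟨hx, FiniteField.pow_card_sub_one_eq_one x hx0⟩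

lemma vec_mem_normalized_inter_iff {α β γ δ x y : F} (hα : α ≠ 0) (hγ : γ ≠ 0) :
    ![1, x, y] ∈ {e ∈ extBallD ![1, α, β] ∩ extBallD ![1, γ, δ] | e 0 = 1} ↔
      (x ≠ 0 ∧ y ≠ 0 ∧ x ≠ 1 ∧ y ≠ 1 ∧ x ≠ y) ∧ (x = α ∨ y = β ∨ x * β = y * α) ∧
        (x = γ ∨ y = δ ∨ x * δ = y * γ) := by
  simp only [mem_ofPred_eq, mem_inter_iff, extBallD, vec_mem_extBall_iff hα,
    vec_mem_extBall_iff hγ, vec_mem_Dq_iff, Matrix.cons_val_zero, and_true]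
  tauto

lemma normalized_inter_nontrivial_of_ne {α β γ δ : F} (hu : ![1, α, β] ∈ Dq)
    (hv : ![1, γ, δ] ∈ Dq) (hαγ : α ≠ γ) (hβδ : β ≠ δ) (h : ¬(α = δ ∧ α = β * γ)) :
    {e ∈ extBallD ![1, α, β] ∩ extBallD ![1, γ, δ] | e 0 = 1}.Nontrivial := by
  obtain ⟨hα0, hβ0, hα1, hβ1, hαβ⟩ := vec_mem_Dq_iff.1 hu
  obtain ⟨hγ0, hδ0, hγ1, hδ1, hγδ⟩ := vec_mem_Dq_iff.1 hv
  refine nontrivial_of_not_all_eq (p := ![1, α, δ]) (q := ![1, γ, β * γ / α])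
    (r := ![1, β * γ / δ, β]) ?_ ?_ ?_ ?_ ?_ ?_ h
  · exact fun h => hαγ (congrFun h 1)
  · exact fun h => hβδ (congrFun h 2).symm
  · intro h
    have : β * γ / α = β := congrFun h 2
    rw [div_eq_iff hα0] at this
    exact hαγ (mul_left_cancel₀ hβ0 (by linear_combination -this))
  · intro h
    rw [vec_mem_normalized_inter_iff hα0 hγ0]
    exact ⟨⟨hα0, hδ0, hα1, hδ1, h⟩, Or.inl rfl, Or.inr (Or.inl rfl)⟩
  · intro h
    rw [vec_mem_normalized_inter_iff hα0 hγ0]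
    refine ⟨⟨hγ0, by positivity, hγ1, ?_, ?_⟩, Or.inr (Or.inr ?_), Or.inl rfl⟩
    · rw [ne_eq, div_eq_one_iff_eq hα0]
      exact Ne.symm h
    · rw [ne_eq, eq_div_iff hα0]
      exact fun h' => hαβ (mul_left_cancel₀ hγ0 (by linear_combination h'))
    · rw [div_mul_cancel₀ _ hα0, mul_comm]
  · intro h
    rw [vec_mem_normalized_inter_iff hα0 hγ0]
    refine ⟨⟨by positivity, hβ0, ?_, hβ1, ?_⟩, Or.inr (Or.inl rfl), Or.inr (Or.inr ?_)⟩
    · rw [ne_eq, div_eq_one_iff_eq hδ0]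
      exact Ne.symm h
    · rw [ne_eq, div_eq_iff hδ0]
      exact fun h' => hγδ (mul_left_cancel₀ hβ0 h')
    · rw [div_mul_cancel₀ _ hδ0]

lemma normalized_inter_nontrivial [Fintype F] (hF : 5 ≤ Fintype.card F)
    (h3 : ¬ 3 ∣ Fintype.card F - 1) {α β γ δ : F} (hu : ![1, α, β] ∈ Dq) (hv : ![1, γ, δ] ∈ Dq) :
    {e ∈ extBallD ![1, α, β] ∩ extBallD ![1, γ, δ] | e 0 = 1}.Nontrivial := by
  obtain ⟨hα0, hβ0, hα1, hβ1, hαβ⟩ := vec_mem_Dq_iff.1 hu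
  obtain ⟨hγ0, hδ0, hγ1, hδ1, hγδ⟩ := vec_mem_Dq_iff.1 hv
  by_cases hαγ : α = γ
  · subst hαγ
    refine ((nontrivial_compl_triple hF 0 1 α).image (f := fun c => ![1, α, c])
      fun c c' h => congrFun h 2).mono ?_
    rintro _ ⟨c, hc, rfl⟩
    simp only [mem_compl_iff, mem_insert_iff, mem_singleton_iff, not_or] at hc
    rw [vec_mem_normalized_inter_iff hα0 hα0]
    exact ⟨⟨hα0, hc.1, hα1, hc.2.1, Ne.symm hc.2.2⟩, Or.inl rfl, Or.inl rfl⟩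
  by_cases hβδ : β = δ
  · subst hβδ
    refine ((nontrivial_compl_triple hF 0 1 β).image (f := fun c => ![1, c, β])
      fun c c' h => congrFun h 1).mono ?_
    rintro _ ⟨c, hc, rfl⟩
    simp only [mem_compl_iff, mem_insert_iff, mem_singleton_iff, not_or] at hc
    rw [vec_mem_normalized_inter_iff hα0 hγ0]
    exact ⟨⟨hc.1, hβ0, hc.2.1, hβ1, hc.2.2⟩, Or.inr (Or.inl rfl), Or.inr (Or.inl rfl)⟩
  by_cases hA : α = δ ∧ α = β * γ
  · by_cases hB : γ = β ∧ γ = α * δ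
    · have hcop : Nat.Coprime 3 (Fintype.card F - 1) :=
        (Nat.Prime.coprime_iff_not_dvd Nat.prime_three).2 h3
      refine absurd (eq_one_of_pow_eq_one_of_coprime hcop hα0 ?_) hα1
      obtain ⟨rfl, hα⟩ := hA
      obtain ⟨rfl, hγ⟩ := hB
      refine mul_left_cancel₀ hα0 ?_
      linear_combination (-(α * α + γ)) * hγ - hα
    · rw [inter_comm]
      exact normalized_inter_nontrivial_of_ne hv hu (Ne.symm hαγ) (Ne.symm hβδ)
        (by rwa [mul_comm δ α])
  · exact normalized_inter_nontrivial_of_ne hu hv hαγ hβδ hA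

lemma two_mul_card_sub_one_le_ncard_inter [Fintype F] (hF : 5 ≤ Fintype.card F)
    (h3 : ¬ 3 ∣ Fintype.card F - 1) {u v : Fin 3 → F} (hu : u ∈ Dq) (hv : v ∈ Dq) :
    2 * (Fintype.card F - 1) ≤ (extBallD u ∩ extBallD v).ncard := by
  rw [ncard_inter_extBallD, mul_comm]
  refine Nat.mul_le_mul_left _ ?_
  rw [extBallD, extBallD, extBall_eq_vec hu.2.2.2.1, extBall_eq_vec hv.2.2.2.1]
  exact one_lt_ncard_iff_nontrivial.2
    (normalized_inter_nontrivial hF h3 (vec_div_mem_Dq hu) (vec_div_mem_Dq hv))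

lemma vec_mem_normalized_inter_sq_iff {a x y : F} (ha0 : a ≠ 0) (ha2 : a ^ 2 ≠ 1)
    (ha3 : a ^ 3 ≠ 1) :
    ![1, x, y] ∈ {e ∈ extBallD ![1, a, a ^ 2] ∩ extBallD ![1, a ^ 2, a] | e 0 = 1} ↔
      (x = a ^ 2 ∧ y = a ^ 3) ∨ (x = a ^ 3 ∧ y = a ^ 2) := by
  have ha1 : a ≠ 1 := (sq_ne_one_iff.1 ha2).1
  have haa : a ≠ a ^ 2 := fun h => ha1 (mul_left_cancel₀ ha0 (by linear_combination -h))
  rw [vec_mem_normalized_inter_iff ha0 (pow_ne_zero 2 ha0)]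
  constructor
  -- of the nine ways to meet both extended balls, only two avoid the excluded coordinates
  · rintro ⟨⟨hx0, hy0, hx1, hy1, hxy⟩, hu | hu | hu, hv | hv | hv⟩ <;> grind
  · rintro (⟨rfl, rfl⟩ | ⟨rfl, rfl⟩) <;> grind

lemma normalized_inter_sq_eq {a : F} (ha0 : a ≠ 0) (ha2 : a ^ 2 ≠ 1) (ha3 : a ^ 3 ≠ 1) :
    {e ∈ extBallD ![1, a, a ^ 2] ∩ extBallD ![1, a ^ 2, a] | e 0 = 1} =
      {![1, a ^ 2, a ^ 3], ![1, a ^ 3, a ^ 2]} := by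
  ext e
  by_cases he : e 0 = 1
  · have : e = ![1, e 1, e 2] := by ext i; fin_cases i <;> simp [he]
    rw [this, vec_mem_normalized_inter_sq_iff ha0 ha2 ha3]
    simp
  · refine iff_of_false (fun h => he h.2) ?_
    rintro (rfl | rfl) <;> exact he rfl

lemma exists_ncard_inter_eq [Fintype F] (hF : 5 ≤ Fintype.card F)
    (h3 : ¬ 3 ∣ Fintype.card F - 1) :
    ∃ u ∈ (Dq : Set (Fin 3 → F)), ∃ v ∈ (Dq : Set (Fin 3 → F)), extBallD u ≠ extBallD v ∧
      (extBallD u ∩ extBallD v).ncard = 2 * (Fintype.card F - 1) := by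
  obtain ⟨a, ha⟩ := (nontrivial_compl_triple hF 0 1 (-1)).nonempty
  simp only [mem_compl_iff, mem_insert_iff, mem_singleton_iff, not_or] at ha
  obtain ⟨ha0, ha1, ha_1⟩ := ha
  have ha2 : a ^ 2 ≠ 1 := sq_ne_one_iff.2 ⟨ha1, ha_1⟩
  have ha3 : a ^ 3 ≠ 1 := fun h => ha1 (eq_one_of_pow_eq_one_of_coprime
    ((Nat.Prime.coprime_iff_not_dvd Nat.prime_three).2 h3) ha0 h)
  have haa : a ≠ a ^ 2 := fun h => ha1 (mul_left_cancel₀ ha0 (by linear_combination -h))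
  have hu : ![1, a, a ^ 2] ∈ Dq := vec_mem_Dq_iff.2 ⟨ha0, pow_ne_zero 2 ha0, ha1, ha2, haa⟩
  have hv : ![1, a ^ 2, a] ∈ Dq := vec_mem_Dq_iff.2 ⟨pow_ne_zero 2 ha0, ha0, ha2, ha1, haa.symm⟩
  refine ⟨_, hu, _, hv, fun h => ?_, ?_⟩
  · have hmem : ![1, a, a ^ 2] ∈ extBallD ![1, a ^ 2, a] :=
      h ▸ ⟨(vec_mem_extBall_iff ha0).2 (Or.inl rfl), hu⟩
    rcases (vec_mem_extBall_iff (pow_ne_zero 2 ha0)).1 hmem.1 with h' | h' | h'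
    · exact haa h'
    · exact haa h'.symm
    · exact ha2 (mul_left_cancel₀ (pow_ne_zero 2 ha0) (by linear_combination -h'))
  · rw [ncard_inter_extBallD, normalized_inter_sq_eq ha0 ha2 ha3, ncard_pair, mul_comm]
    intro h
    have h23 : a ^ 2 = a ^ 3 := congrFun h 1
    exact haa (mul_left_cancel₀ ha0 (by linear_combination h23))

theorem stmt_1_general (q : ℕ) (hq5 : 5 ≤ q) (F : Type*) [Field F] [Fintype F]
    (hcard : Fintype.card F = q) (h3 : ¬ (3 ∣ q - 1)) :
    (∃ u ∈ (Dq : Set (Fin 3 → F)), ∃ v ∈ (Dq : Set (Fin 3 → F)),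
        (extBallD u ∩ extBallD v).ncard = 2 * (q - 1)) ∧
    IsGreatest {t : ℕ | ∀ u ∈ (Dq : Set (Fin 3 → F)), ∀ v ∈ (Dq : Set (Fin 3 → F)),
        extBallD u ≠ extBallD v → t ≤ (extBallD u ∩ extBallD v).ncard} (2 * (q - 1)) := by
  subst hcard
  obtain ⟨u, hu, v, hv, hne, huv⟩ := exists_ncard_inter_eq hq5 h3
  exact ⟨⟨u, hu, v, hv, huv⟩, fun u hu v hv _ => two_mul_card_sub_one_le_ncard_inter hq5 h3 hu hv,
    fun t ht => huv ▸ ht u hu v hv hne⟩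

theorem stmt_1 (q : ℕ) (hq : IsPrimePow q) (hq5 : 5 ≤ q) (F : Type*) [Field F] [Fintype F]
    (hcard : Fintype.card F = q) (h3 : ¬ (3 ∣ q - 1)) :
    (∃ u ∈ (Dq : Set (Fin 3 → F)), ∃ v ∈ (Dq : Set (Fin 3 → F)),
        (extBallD u ∩ extBallD v).ncard = 2 * (q - 1)) ∧
    IsGreatest {t : ℕ | ∀ u ∈ (Dq : Set (Fin 3 → F)), ∀ v ∈ (Dq : Set (Fin 3 → F)),
        extBallD u ≠ extBallD v → t ≤ (extBallD u ∩ extBallD v).ncard} (2 * (q - 1)) :=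
  stmt_1_general q hq5 F hcard h3
end

section
/- Let q be a prime power and u ∈ 𝔽_q³ a vector all of whose three coordinates are nonzero, and suppose exactly two distinct values occur among the three coordinates of u. Then |Ẽ(u)| = (q-1)(2q-6). -/
open Set Pointwise

variable {F : Type*} [Field F]

/-!
A permutation of the coordinates preserves Hamming distance and `D_q`, so we may assume
`u = (a, a, b)` with `a ≠ b`. A vector of `D_q` agreeing with `λu` in two coordinates cannot
agree in the two equal ones; hence `Ẽ(u)` consists of the vectors `λ(y, a, b)` and `λ(a, y, b)`
with `λ ≠ 0` and `y ∉ {0, a, b}`, and these `2(q - 1)(q - 3)` vectors are pairwise distinct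
(the last coordinate `λb` determines `λ`).
-/

lemma hdist_le_one_iff_s6 {α : Type*} {u v : Fin 3 → α} :
    hdist u v ≤ 1 ↔ ∃ k, ∀ i, i ≠ k → u i = v i := by
  rw [hdist, ncard_le_one_iff_subset_singleton]
  simp only [subset_singleton_iff, mem_ofPred_eq, not_imp_comm]

lemma hdist_comp_perm {α : Type*} (σ : Equiv.Perm (Fin 3)) (u v : Fin 3 → α) :
    hdist (u ∘ σ) (v ∘ σ) = hdist u v :=
  ncard_preimage_of_injective_subset_range (s := {i | u i ≠ v i}) σ.injective (by simp)

lemma mem_extBall_iff {u v : Fin 3 → F} :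
    v ∈ extBall u ↔ ∃ l : F, ∃ k, ∀ i, i ≠ k → v i = l * u i := by
  simp only [extBall, ball, mem_iUnion, mem_ofPred_eq, hdist_le_one_iff_s6, Pi.smul_apply,
    smul_eq_mul, eq_comm]

lemma comp_perm_mem_extBall_iff (σ : Equiv.Perm (Fin 3)) {u v : Fin 3 → F} :
    v ∘ σ ∈ extBall (u ∘ σ) ↔ v ∈ extBall u := by
  simp only [extBall, ball, mem_iUnion, mem_ofPred_eq]
  exact exists_congr fun l => by rw [← hdist_comp_perm σ (l • u) v]; rfl

lemma mem_Dq_iff {v : Fin 3 → F} : v ∈ Dq ↔ Function.Injective v ∧ ∀ i, v i ≠ 0 := by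
  constructor
  · rintro ⟨h01, h02, h12, h0, h1, h2⟩
    refine ⟨fun i j hij => ?_, fun i => ?_⟩
    · fin_cases i <;> fin_cases j <;> simp_all [eq_comm]
    · fin_cases i <;> assumption
  · rintro ⟨hv, hv0⟩
    exact ⟨hv.ne (by decide), hv.ne (by decide), hv.ne (by decide), hv0 0, hv0 1, hv0 2⟩

lemma comp_perm_mem_Dq_iff (σ : Equiv.Perm (Fin 3)) {v : Fin 3 → F} : v ∘ σ ∈ Dq ↔ v ∈ Dq := by
  simp only [mem_Dq_iff, Function.comp_apply]
  exact and_congr (Function.Injective.of_comp_iff' v σ.bijective)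
    (σ.forall_congr_right (q := fun i => v i ≠ 0))

lemma smul_mem_Dq_iff {l : F} (hl : l ≠ 0) {v : Fin 3 → F} : l • v ∈ Dq ↔ v ∈ Dq := by
  have : l • v = (l * ·) ∘ v := rfl
  simp only [mem_Dq_iff, this, Function.Injective.of_comp_iff (mul_right_injective₀ hl),
    Function.comp_apply, mul_ne_zero_iff, hl, ne_eq, not_false_eq_true, true_and]

lemma ncard_extBallD_comp_perm (σ : Equiv.Perm (Fin 3)) (u : Fin 3 → F) :
    (extBallD (u ∘ σ)).ncard = (extBallD u).ncard := by
  have hpre : extBallD u = (· ∘ σ) ⁻¹' extBallD (u ∘ σ) :=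
    ext fun v => (and_congr (comp_perm_mem_extBall_iff σ) (comp_perm_mem_Dq_iff σ)).symm
  rw [hpre, ncard_preimage_of_injective_subset_range σ.surjective.injective_comp_right]
  exact fun w _ => ⟨w ∘ σ.symm, by ext; simp⟩

section TwoValues

variable {a b : F} (ha : a ≠ 0) (hb : b ≠ 0) (hab : a ≠ b)
include ha hb hab

lemma vec_yab_mem_Dq_iff (y : F) : ![y, a, b] ∈ Dq ↔ y ∉ ({0, a, b} : Set F) := by
  simp [Dq, ha, hb, hab, and_comm, and_left_comm]

lemma vec_ayb_mem_Dq_iff (y : F) : ![a, y, b] ∈ Dq ↔ y ∉ ({0, a, b} : Set F) := by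
  simp [Dq, ha, hb, hab, eq_comm, and_comm, and_left_comm, and_assoc]

lemma extBallD_aab :
    extBallD ![a, a, b] =
      (fun p : F × F => p.1 • ![p.2, a, b]) '' ({0}ᶜ ×ˢ {0, a, b}ᶜ) ∪
        (fun p : F × F => p.1 • ![a, p.2, b]) '' ({0}ᶜ ×ˢ {0, a, b}ᶜ) := by
  ext v
  constructor
  · rintro ⟨hE, hD⟩
    obtain ⟨l, k, hk⟩ := mem_extBall_iff.1 hE
    obtain ⟨hinj, hv0⟩ := mem_Dq_iff.1 hD
    have hl : l ≠ 0 := by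
      rintro rfl
      exact hv0 _ ((hk _ (Fin.succAbove_ne k 0)).trans (zero_mul _))
    fin_cases k
    · have hv : v = l • ![l⁻¹ * v 0, a, b] := by
        ext i; fin_cases i <;> simp [hk, hl]
      rw [hv, smul_mem_Dq_iff hl, vec_yab_mem_Dq_iff ha hb hab] at hD
      exact Or.inl ⟨(l, _), ⟨hl, hD⟩, hv.symm⟩
    · have hv : v = l • ![a, l⁻¹ * v 1, b] := by
        ext i; fin_cases i <;> simp [hk, hl]
      rw [hv, smul_mem_Dq_iff hl, vec_ayb_mem_Dq_iff ha hb hab] at hD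
      exact Or.inr ⟨(l, _), ⟨hl, hD⟩, hv.symm⟩
    · exact absurd ((hk 0 (by decide)).trans (hk 1 (by decide)).symm) (hinj.ne (by decide))
  · rintro (⟨⟨l, y⟩, ⟨hl, hy⟩, rfl⟩ | ⟨⟨l, y⟩, ⟨hl, hy⟩, rfl⟩)
    · refine ⟨mem_extBall_iff.2 ⟨l, 0, fun i hi => ?_⟩, (smul_mem_Dq_iff hl).2 ?_⟩
      · fin_cases i <;> simp_all
      · exact (vec_yab_mem_Dq_iff ha hb hab y).2 hy
    · refine ⟨mem_extBall_iff.2 ⟨l, 1, fun i hi => ?_⟩, (smul_mem_Dq_iff hl).2 ?_⟩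
      · fin_cases i <;> simp_all
      · exact (vec_ayb_mem_Dq_iff ha hb hab y).2 hy

lemma ncard_extBallD_aab [Fintype F] :
    (extBallD ![a, a, b]).ncard = 2 * ((Fintype.card F - 1) * (Fintype.card F - 3)) := by
  have hinj₀ : InjOn (fun p : F × F => p.1 • ![p.2, a, b]) ({0}ᶜ ×ˢ {0, a, b}ᶜ) := by
    rintro ⟨l, y⟩ ⟨hl, -⟩ ⟨l', y'⟩ - h
    obtain rfl : l = l' := mul_right_cancel₀ hb (by simpa using congrFun h 2)
    obtain rfl : y = y' := mul_left_cancel₀ hl (by simpa using congrFun h 0)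
    rfl
  have hinj₁ : InjOn (fun p : F × F => p.1 • ![a, p.2, b]) ({0}ᶜ ×ˢ {0, a, b}ᶜ) := by
    rintro ⟨l, y⟩ ⟨hl, -⟩ ⟨l', y'⟩ - h
    obtain rfl : l = l' := mul_right_cancel₀ hb (by simpa using congrFun h 2)
    obtain rfl : y = y' := mul_left_cancel₀ hl (by simpa using congrFun h 1)
    rfl
  have hdisj : Disjoint ((fun p : F × F => p.1 • ![p.2, a, b]) '' ({0}ᶜ ×ˢ {0, a, b}ᶜ))
      ((fun p : F × F => p.1 • ![a, p.2, b]) '' ({0}ᶜ ×ˢ {0, a, b}ᶜ)) := by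
    rw [disjoint_left]
    rintro _ ⟨⟨l, y⟩, ⟨hl, hy⟩, rfl⟩ ⟨⟨l', y'⟩, -, h⟩
    obtain rfl : l' = l := mul_right_cancel₀ hb (by simpa using congrFun h 2)
    exact hy (by simp [mul_left_cancel₀ hl (by simpa using congrFun h 0)])
  have hcard3 : ({0, a, b} : Set F).ncard = 3 := by
    rw [ncard_insert_of_notMem (by simp [ha.symm, hb.symm]), ncard_pair hab]
  rw [extBallD_aab ha hb hab, ncard_union_eq hdisj, hinj₀.ncard_image,
    hinj₁.ncard_image, ncard_prod, ncard_compl, ncard_compl, ncard_singleton, hcard3,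
    Nat.card_eq_fintype_card, two_mul]

end TwoValues

lemma exists_perm_comp_eq_vec_aab {α : Type*} {u : Fin 3 → α}
    (h : ({u 0, u 1, u 2} : Set α).ncard = 2) :
    ∃ σ : Equiv.Perm (Fin 3), ∃ a b, a ≠ b ∧ u ∘ σ = ![a, a, b] := by
  by_cases h01 : u 0 = u 1
  · refine ⟨1, u 0, u 2, fun h02 => ?_, ?_⟩
    · simp [← h01, ← h02] at h
    · ext i; fin_cases i <;> simp [h01]
  by_cases h02 : u 0 = u 2
  · refine ⟨Equiv.swap 1 2, u 0, u 1, h01, ?_⟩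
    ext i; fin_cases i <;> simp [h02, Equiv.swap_apply_def]
  have h12 : u 1 = u 2 := by
    by_contra h12
    rw [ncard_insert_of_notMem (by simp [h01, h02]), ncard_pair h12] at h
    omega
  refine ⟨Equiv.swap 0 2, u 1, u 0, Ne.symm h01, ?_⟩
  ext i; fin_cases i <;> simp [h12, Equiv.swap_apply_def]

theorem stmt_6_general (q : ℕ) (F : Type*) [Field F] [Fintype F]
    (hcard : Fintype.card F = q) (u : Fin 3 → F)
    (h0 : ∀ i : Fin 3, u i ≠ 0)
    (h2 : ({u 0, u 1, u 2} : Set F).ncard = 2) :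
    (extBallD u).ncard = (q - 1) * (2 * q - 6) := by
  obtain ⟨σ, a, b, hab, hσ⟩ := exists_perm_comp_eq_vec_aab h2
  have ha : a ≠ 0 := fun ha => h0 (σ 0) (by simpa [ha] using congrFun hσ 0)
  have hb : b ≠ 0 := fun hb => h0 (σ 2) (by simpa [hb] using congrFun hσ 2)
  rw [← ncard_extBallD_comp_perm σ, hσ, ncard_extBallD_aab ha hb hab, hcard,
    show 2 * q - 6 = 2 * (q - 3) by omega]
  ring

theorem stmt_6 (q : ℕ) (hq : IsPrimePow q) (F : Type*) [Field F] [Fintype F]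
    (hcard : Fintype.card F = q) (u : Fin 3 → F)
    (h0 : ∀ i : Fin 3, u i ≠ 0)
    (h2 : ({u 0, u 1, u 2} : Set F).ncard = 2) :
    (extBallD u).ncard = (q - 1) * (2 * q - 6) :=
  stmt_6_general q F hcard u h0 h2
end

section
/- Let q be a prime power and u, v ∈ 𝔽_q³ vectors with Ẽ(u) ≠ ∅ and Ẽ(v) ≠ ∅. Then |Ẽ(u) ∩ Ẽ(v)| = (q-1)·∑_{μ ∈ 𝔽_q*} |B̃(u) ∩ B̃(μv)|. -/
open Set Pointwise

variable {F : Type*} [Field F]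

/-! A vector `x ∈ D_q` has three nonzero coordinates, and two vectors at distance at most 1 from
`x` agree with `x` in a common coordinate (`1 + 1 < 3`). Hence `x` lies in `B(λu)` for at most one
scalar `λ`, and that scalar is nonzero. So `Ẽ(u) ∩ Ẽ(v)` is the disjoint union over
`(λ, μ) ∈ (𝔽_q^*)²` of `B̃(λu) ∩ B̃(μv)`. Multiplication by `λ⁻¹` preserves Hamming distance and
`D_q`, so this piece has the size of `B̃(u) ∩ B̃(λ⁻¹μv)`; for each of the `q - 1` values of `λ`,
summing over `μ` gives `∑_μ |B̃(u) ∩ B̃(μv)|`. -/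

lemma hdist_smul_smul {c : F} (hc : c ≠ 0) (u v : Fin 3 → F) :
    hdist (c • u) (c • v) = hdist u v := by
  simp only [hdist, Pi.smul_apply, smul_eq_mul, ne_eq, mul_right_inj' hc]

lemma smul_mem_Dq_iff_s11 {c : F} (hc : c ≠ 0) (x : Fin 3 → F) : c • x ∈ Dq ↔ x ∈ Dq := by
  simp only [Dq, Set.mem_ofPred_eq, Pi.smul_apply, smul_eq_mul, ne_eq, mul_right_inj' hc,
    mul_eq_zero, hc, false_or]

lemma ballD_units_smul (c : Fˣ) (u : Fin 3 → F) : ballD (c • u) = c • ballD u := by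
  ext x
  rw [Set.mem_smul_set_iff_inv_smul_mem]
  conv_lhs => rw [← smul_inv_smul c x]
  simp only [ballD, ball, Set.mem_inter_iff, Set.mem_ofPred_eq, Units.smul_def,
    hdist_smul_smul c.ne_zero, smul_mem_Dq_iff_s11 c.ne_zero]

lemma apply_ne_zero_of_mem_Dq {x : Fin 3 → F} (hx : x ∈ Dq) (i : Fin 3) : x i ≠ 0 := by
  obtain ⟨-, -, -, h0, h1, h2⟩ := hx
  fin_cases i <;> assumption

lemma exists_apply_eq_of_mem_ball {α : Type*} {x y z : Fin 3 → α} (hy : x ∈ ball y)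
    (hz : x ∈ ball z) :
    ∃ i, y i = x i ∧ z i = x i := by
  by_contra! h
  have hcover : {i | y i ≠ x i} ∪ {i | z i ≠ x i} = Set.univ :=
    Set.eq_univ_of_forall fun i => by simpa [imp_iff_not_or] using h i
  have := Set.ncard_union_le {i | y i ≠ x i} {i | z i ≠ x i}
  simp only [hcover, Set.ncard_univ, Nat.card_eq_fintype_card, Fintype.card_fin] at this
  simp only [ball, hdist, Set.mem_ofPred_eq] at hy hz
  omega

lemma ne_zero_of_mem_ball_smul {x u : Fin 3 → F} {a : F} (hx : x ∈ Dq)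
    (ha : x ∈ ball (a • u)) : a ≠ 0 := by
  rintro rfl
  obtain ⟨i, hi, -⟩ := exists_apply_eq_of_mem_ball ha ha
  simp only [zero_smul, Pi.zero_apply] at hi
  exact apply_ne_zero_of_mem_Dq hx i hi.symm

lemma eq_of_mem_ball_smul {x u : Fin 3 → F} {a b : F} (hx : x ∈ Dq)
    (ha : x ∈ ball (a • u)) (hb : x ∈ ball (b • u)) : a = b := by
  obtain ⟨i, hai, hbi⟩ := exists_apply_eq_of_mem_ball ha hb
  simp only [Pi.smul_apply, smul_eq_mul] at hai hbi
  have hui : u i ≠ 0 := by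
    rintro h
    exact apply_ne_zero_of_mem_Dq hx i (by rw [← hai, h, mul_zero])
  exact mul_right_cancel₀ hui (hai.trans hbi.symm)

lemma extBallD_eq_iUnion (u : Fin 3 → F) : extBallD u = ⋃ c : Fˣ, ballD (c • u) := by
  ext x
  simp only [extBallD, extBall, ballD, Set.mem_inter_iff, Set.mem_iUnion, Units.smul_def]
  constructor
  · rintro ⟨⟨a, ha⟩, hx⟩
    exact ⟨Units.mk0 a (ne_zero_of_mem_ball_smul hx ha), ha, hx⟩
  · rintro ⟨c, hc, hx⟩
    exact ⟨⟨c, hc⟩, hx⟩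

lemma pairwise_disjoint_ballD_smul (u : Fin 3 → F) :
    Pairwise fun a b : Fˣ => Disjoint (ballD (a • u)) (ballD (b • u)) :=
  fun _ _ hab => Set.disjoint_left.2 fun _ ha hb =>
    hab (Units.ext (eq_of_mem_ball_smul ha.2 ha.1 hb.1))

lemma extBallD_inter_extBallD (u v : Fin 3 → F) :
    extBallD u ∩ extBallD v = ⋃ p : Fˣ × Fˣ, ballD (p.1 • u) ∩ ballD (p.2 • v) := by
  rw [Set.iUnion_prod', extBallD_eq_iUnion, extBallD_eq_iUnion, Set.iUnion_inter]
  simp only [Set.inter_iUnion]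

lemma pairwise_disjoint_ballD_inter_ballD (u v : Fin 3 → F) :
    Pairwise fun p q : Fˣ × Fˣ =>
      Disjoint (ballD (p.1 • u) ∩ ballD (p.2 • v)) (ballD (q.1 • u) ∩ ballD (q.2 • v)) := by
  rintro ⟨a, b⟩ ⟨a', b'⟩ h
  by_cases ha : a = a'
  · have hb : b ≠ b' := fun hb => h (by rw [ha, hb])
    exact (pairwise_disjoint_ballD_smul v hb).mono Set.inter_subset_right Set.inter_subset_right
  · exact (pairwise_disjoint_ballD_smul u ha).mono Set.inter_subset_left Set.inter_subset_left

lemma ncard_ballD_inter_ballD_units_smul (a b : Fˣ) (u v : Fin 3 → F) :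
    (ballD (a • u) ∩ ballD (b • v)).ncard = (ballD u ∩ ballD ((a⁻¹ * b) • v)).ncard := by
  have hb : b • v = a • (a⁻¹ * b) • v := by rw [smul_smul, mul_inv_cancel_left]
  rw [hb, ballD_units_smul, ballD_units_smul a, ← Set.smul_set_inter, Set.ncard_smul_set]

theorem stmt_11_general (q : ℕ) (F : Type*) [Field F] [Fintype F] [DecidableEq F]
    (hcard : Fintype.card F = q) (u v : Fin 3 → F) :
    (extBallD u ∩ extBallD v).ncard =
      (q - 1) * ∑ m : Fˣ, (ballD u ∩ ballD ((m : F) • v)).ncard := by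
  have hrow (a : Fˣ) : ∑ b : Fˣ, (ballD (a • u) ∩ ballD (b • v)).ncard =
      ∑ m : Fˣ, (ballD u ∩ ballD ((m : F) • v)).ncard := by
    simp only [ncard_ballD_inter_ballD_units_smul]
    exact Fintype.sum_equiv (Equiv.mulLeft a⁻¹) _ _ fun _ => rfl
  rw [extBallD_inter_extBallD, Set.ncard_iUnion_of_finite (fun _ => Set.toFinite _)
    (pairwise_disjoint_ballD_inter_ballD u v), finsum_eq_sum_of_fintype, Fintype.sum_prod_type]
  simp only [hrow, Finset.sum_const, Finset.card_univ, Fintype.card_units, hcard, smul_eq_mul]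

theorem stmt_11 (q : ℕ) (hq : IsPrimePow q) (F : Type*) [Field F] [Fintype F] [DecidableEq F]
    (hcard : Fintype.card F = q) (u v : Fin 3 → F)
    (hu : (extBallD u).Nonempty) (hv : (extBallD v).Nonempty) :
    (extBallD u ∩ extBallD v).ncard =
      (q - 1) * ∑ m : Fˣ, (ballD u ∩ ballD ((m : F) • v)).ncard :=
  stmt_11_general q F hcard u v
end
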